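/- arXiv:2210.10847 — 2 statements merged into one kernel-verified Lean document; each statement's English description precedes it below -/
import Mathlib

section
/- Let x: U → ℝ³ be a frontal with tangent moving basis Ω = (w₁ w₂) and induced unit normal n, and let ξ = φn + Z be transversal to x, where Z = a w₁ + b w₂ with a, b: U → ℝ smooth and φ: U → ℝ∖{0} smooth. Then the relative transversal connection form satisfies, on U, τᵢ = (1/φ)(a·p₁ᵢ + b·p₂ᵢ + φ_{uᵢ}) for i = 1,2, where pᵢⱼ := ⟨(wᵢ)_{uⱼ}, n⟩; explicitly, τ₁ = (1/φ)(a·e_Ω + b·f₂Ω + φ_{u₁}) and τ₂ = (1/φ)(a·f₁Ω + b·g_Ω + φ_{u₂}). -/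
open Matrix Topology Filter

noncomputable section

/-- Vectors in ℝ³. -/
abbrev V3 : Type := Fin 3 → ℝ

/-- The Euclidean dot product on ℝ³. -/
def dot3 (v w : V3) : ℝ := v 0 * w 0 + v 1 * w 1 + v 2 * w 2

/-- The cross product on ℝ³. -/
def cross3 (v w : V3) : V3 :=
  ![v 1 * w 2 - v 2 * w 1, v 2 * w 0 - v 0 * w 2, v 0 * w 1 - v 1 * w 0]

/-- Partial derivative in the `u₁` direction. -/
def pd1 {E : Type*} [NormedAddCommGroup E] [NormedSpace ℝ E]
    (f : ℝ × ℝ → E) (q : ℝ × ℝ) : E := fderiv ℝ f q (1, 0)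

/-- Partial derivative in the `u₂` direction. -/
def pd2 {E : Type*} [NormedAddCommGroup E] [NormedSpace ℝ E]
    (f : ℝ × ℝ → E) (q : ℝ × ℝ) : E := fderiv ℝ f q (0, 1)

/-- The singular set `Σ(x)` of `x` on `U`. -/
def SingSet (x : ℝ × ℝ → V3) (U : Set (ℝ × ℝ)) : Set (ℝ × ℝ) :=
  {q ∈ U | ¬ LinearIndependent ℝ ![pd1 x q, pd2 x q]}

/-- `x` is a frontal on the open set `U`, with smooth unit normal field `n`. -/
def IsFrontal (x n : ℝ × ℝ → V3) (U : Set (ℝ × ℝ)) : Prop :=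
  IsOpen U ∧ ContDiffOn ℝ (⊤ : ℕ∞) x U ∧ ContDiffOn ℝ (⊤ : ℕ∞) n U ∧
  (∀ q ∈ U, dot3 (n q) (n q) = 1) ∧
  (∀ q ∈ U, dot3 (pd1 x q) (n q) = 0 ∧ dot3 (pd2 x q) (n q) = 0)

/-- `x` is proper: its singular set has empty interior. -/
def IsProper (x : ℝ × ℝ → V3) (U : Set (ℝ × ℝ)) : Prop :=
  interior (SingSet x U) = ∅

/-- `(w1 w2)` is a tangent moving basis of `x` on `U`. -/
def IsTMB (x w1 w2 : ℝ × ℝ → V3) (U : Set (ℝ × ℝ)) : Prop :=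
  ContDiffOn ℝ (⊤ : ℕ∞) w1 U ∧ ContDiffOn ℝ (⊤ : ℕ∞) w2 U ∧
  (∀ q ∈ U, LinearIndependent ℝ ![w1 q, w2 q]) ∧
  (∀ q ∈ U, pd1 x q ∈ Submodule.span ℝ {w1 q, w2 q} ∧
            pd2 x q ∈ Submodule.span ℝ {w1 q, w2 q})

/-- The unit normal induced by a tangent moving basis: `w₁ × w₂ / ‖w₁ × w₂‖`. -/
def inducedNormal (w1 w2 : ℝ × ℝ → V3) (q : ℝ × ℝ) : V3 :=
  (Real.sqrt (dot3 (cross3 (w1 q) (w2 q)) (cross3 (w1 q) (w2 q))))⁻¹ •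
    cross3 (w1 q) (w2 q)

/-- The matrix `I_Ω = Ωᵀ Ω`. -/
def IOmega (w1 w2 : ℝ × ℝ → V3) (q : ℝ × ℝ) : Matrix (Fin 2) (Fin 2) ℝ :=
  !![dot3 (w1 q) (w1 q), dot3 (w1 q) (w2 q);
     dot3 (w2 q) (w1 q), dot3 (w2 q) (w2 q)]

/-- The matrix `II_Ω`, with `(II_Ω)ᵢⱼ = ⟨(wᵢ)_{uⱼ}, n⟩` for the induced normal `n`. -/
def IIOmega (w1 w2 : ℝ × ℝ → V3) (q : ℝ × ℝ) : Matrix (Fin 2) (Fin 2) ℝ :=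
  !![dot3 (pd1 w1 q) (inducedNormal w1 w2 q), dot3 (pd2 w1 q) (inducedNormal w1 w2 q);
     dot3 (pd1 w2 q) (inducedNormal w1 w2 q), dot3 (pd2 w2 q) (inducedNormal w1 w2 q)]

/-- The Ω-relative curvature `K_Ω = det (−II_Ωᵀ I_Ω⁻¹)`. -/
def relK (w1 w2 : ℝ × ℝ → V3) (q : ℝ × ℝ) : ℝ :=
  (-(IIOmega w1 w2 q)ᵀ * (IOmega w1 w2 q)⁻¹).det

/-- The tangent plane at a regular point, `span{x_{u₁}, x_{u₂}}`. -/
def tangentSpan (x : ℝ × ℝ → V3) (q : ℝ × ℝ) : Submodule ℝ V3 :=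
  Submodule.span ℝ {pd1 x q, pd2 x q}

/-- The Gaussian curvature `K = (eg − f²)/(EG − F²)` w.r.t. the unit normal `n`. -/
def gaussK (x n : ℝ × ℝ → V3) (q : ℝ × ℝ) : ℝ :=
  (dot3 (pd1 (pd1 x) q) (n q) * dot3 (pd2 (pd2 x) q) (n q)
      - dot3 (pd2 (pd1 x) q) (n q) ^ 2) /
    (dot3 (pd1 x q) (pd1 x q) * dot3 (pd2 x q) (pd2 x q)
      - dot3 (pd1 x q) (pd2 x q) ^ 2)

/-- `ξ` is the usual Blaschke normal vector field of `x` on the (regular) set `R`: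
`⟨ξ, n⟩ = |K|^{1/4}`, its tangential part `W = ξ − ⟨ξ,n⟩n` is tangent, and `ξ` is
equiaffine (its partial derivatives are tangent), which encodes `II(W, X) = −X(|K|^{1/4})`. -/
def IsUsualBlaschkeOn (x n ξ : ℝ × ℝ → V3) (R : Set (ℝ × ℝ)) : Prop :=
  ∀ q ∈ R,
    dot3 (ξ q) (n q) = |gaussK x n q| ^ ((4 : ℝ)⁻¹) ∧
    (ξ q - dot3 (ξ q) (n q) • n q ∈ tangentSpan x q) ∧
    pd1 ξ q ∈ tangentSpan x q ∧ pd2 ξ q ∈ tangentSpan x q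

/-- `ξ` is the Blaschke vector field of the frontal `x`: a smooth extension to `U` of
the usual Blaschke vector field defined on the regular part `U ∖ Σ(x)`. -/
def IsBlaschkeField (x n ξ : ℝ × ℝ → V3) (U : Set (ℝ × ℝ)) : Prop :=
  ContDiffOn ℝ (⊤ : ℕ∞) ξ U ∧ IsUsualBlaschkeOn x n ξ (U \ SingSet x U)

/-- Entrywise partial derivative of a matrix-valued map, in the `u₁` direction. -/
def pdMat1 {m n : Type*} (M : ℝ × ℝ → Matrix m n ℝ) (q : ℝ × ℝ) : Matrix m n ℝ :=
  Matrix.of fun i j => pd1 (fun u => M u i j) q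

/-- Entrywise partial derivative of a matrix-valued map, in the `u₂` direction. -/
def pdMat2 {m n : Type*} (M : ℝ × ℝ → Matrix m n ℝ) (q : ℝ × ℝ) : Matrix m n ℝ :=
  Matrix.of fun i j => pd2 (fun u => M u i j) q

lemma dot3_comm (v w : V3) : dot3 v w = dot3 w v := by
  simp [dot3]; ring

lemma dot3_add_left (u v w : V3) : dot3 (u + v) w = dot3 u w + dot3 v w := by
  simp [dot3]; ring

lemma dot3_smul_left (c : ℝ) (v w : V3) : dot3 (c • v) w = c * dot3 v w := by
  simp [dot3]; ring

lemma dot3_w1_normal (w1 w2 : ℝ × ℝ → V3) (q : ℝ × ℝ) :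
    dot3 (w1 q) (inducedNormal w1 w2 q) = 0 := by
  simp only [inducedNormal, dot3_comm, dot3_smul_left]
  simp [dot3, cross3]; ring

lemma dot3_w2_normal (w1 w2 : ℝ × ℝ → V3) (q : ℝ × ℝ) :
    dot3 (w2 q) (inducedNormal w1 w2 q) = 0 := by
  simp only [inducedNormal, dot3_comm, dot3_smul_left]
  simp [dot3, cross3]; ring

lemma fderiv_dot3 (f g : ℝ × ℝ → V3) (q v : ℝ × ℝ)
    (hf : DifferentiableAt ℝ f q) (hg : DifferentiableAt ℝ g q) :
    fderiv ℝ (fun u => dot3 (f u) (g u)) q v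
      = dot3 (fderiv ℝ f q v) (g q) + dot3 (f q) (fderiv ℝ g q v) := by
  have hfi : ∀ i : Fin 3, HasFDerivAt (fun u => f u i)
      ((ContinuousLinearMap.proj i).comp (fderiv ℝ f q)) q :=
    fun i => (ContinuousLinearMap.proj i : V3 →L[ℝ] ℝ).hasFDerivAt.comp q hf.hasFDerivAt
  have hgi : ∀ i : Fin 3, HasFDerivAt (fun u => g u i)
      ((ContinuousLinearMap.proj i).comp (fderiv ℝ g q)) q :=
    fun i => (ContinuousLinearMap.proj i : V3 →L[ℝ] ℝ).hasFDerivAt.comp q hg.hasFDerivAt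
  have h := (((hfi 0).mul (hgi 0)).add ((hfi 1).mul (hgi 1))).add ((hfi 2).mul (hgi 2))
  have h2 : HasFDerivAt (fun u => dot3 (f u) (g u)) _ q := h
  rw [h2.fderiv]
  simp [dot3, mul_comm]
  ring

/-- If `ξ = φn + a w₁ + b w₂` is transversal to the frontal `x`, the
relative transversal connection form satisfies `τᵢ = (1/φ)(a p₁ᵢ + b p₂ᵢ + φ_{uᵢ})`,
i.e. `τ₁ = (1/φ)(a e_Ω + b f₂Ω + φ_{u₁})` and `τ₂ = (1/φ)(a f₁Ω + b g_Ω + φ_{u₂})`. -/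
theorem statement3 (U : Set (ℝ × ℝ)) (x w1 w2 ξ : ℝ × ℝ → V3) (φ a b : ℝ × ℝ → ℝ)
    (hx : ContDiffOn ℝ (⊤ : ℕ∞) x U)
    (hfr : IsFrontal x (inducedNormal w1 w2) U)
    (hΩ : IsTMB x w1 w2 U)
    (hφs : ContDiffOn ℝ (⊤ : ℕ∞) φ U) (has : ContDiffOn ℝ (⊤ : ℕ∞) a U) (hbs : ContDiffOn ℝ (⊤ : ℕ∞) b U)
    (hφ0 : ∀ q ∈ U, φ q ≠ 0)
    (hξdef : ∀ q ∈ U,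
      ξ q = φ q • inducedNormal w1 w2 q + (a q • w1 q + b q • w2 q))
    (hξs : ContDiffOn ℝ (⊤ : ℕ∞) ξ U)
    (hξtrans : ∀ q ∈ U, ξ q ∉ Submodule.span ℝ {w1 q, w2 q})
    (S11 S12 S21 S22 τ1 τ2 : ℝ × ℝ → ℝ)
    (hξu1 : ∀ q ∈ U, pd1 ξ q = -(S11 q) • w1 q - S12 q • w2 q + τ1 q • ξ q)
    (hξu2 : ∀ q ∈ U, pd2 ξ q = -(S21 q) • w1 q - S22 q • w2 q + τ2 q • ξ q) :
    ∀ q ∈ U,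
      τ1 q = (φ q)⁻¹ * (a q * dot3 (pd1 w1 q) (inducedNormal w1 w2 q)
        + b q * dot3 (pd1 w2 q) (inducedNormal w1 w2 q) + pd1 φ q) ∧
      τ2 q = (φ q)⁻¹ * (a q * dot3 (pd2 w1 q) (inducedNormal w1 w2 q)
        + b q * dot3 (pd2 w2 q) (inducedNormal w1 w2 q) + pd2 φ q) := by
  intro q hq
  obtain ⟨hU, hxs', hns, hnn, -⟩ := hfr
  obtain ⟨hw1s, hw2s, -, -⟩ := hΩ
  set n := inducedNormal w1 w2 with hn
  have hmem : U ∈ 𝓝 q := hU.mem_nhds hq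
  have hnd : DifferentiableAt ℝ n q := (hns.contDiffAt hmem).differentiableAt (by simp)
  have hw1d : DifferentiableAt ℝ w1 q := (hw1s.contDiffAt hmem).differentiableAt (by simp)
  have hw2d : DifferentiableAt ℝ w2 q := (hw2s.contDiffAt hmem).differentiableAt (by simp)
  have hφd : DifferentiableAt ℝ φ q := (hφs.contDiffAt hmem).differentiableAt (by simp)
  have hξd : DifferentiableAt ℝ ξ q := (hξs.contDiffAt hmem).differentiableAt (by simp)
  -- ⟨n, n'⟩ = 0
  have hnn1 : ∀ v, dot3 (n q) (fderiv ℝ n q v) = 0 := by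
    intro v
    have hconst : (fun u => dot3 (n u) (n u)) =ᶠ[𝓝 q] fun _ => (1 : ℝ) :=
      Filter.eventually_of_mem hmem fun u hu => hnn u hu
    have h0 : fderiv ℝ (fun u => dot3 (n u) (n u)) q = 0 := by
      rw [hconst.fderiv_eq]; exact fderiv_const_apply 1
    have h2 := fderiv_dot3 n n q v hnd hnd
    rw [h0] at h2
    simp only [ContinuousLinearMap.zero_apply] at h2
    rw [dot3_comm (fderiv ℝ n q v) (n q)] at h2
    linarith
  -- ⟨w₁, n'⟩ = -⟨w₁', n⟩
  have hw1n : ∀ v, dot3 (w1 q) (fderiv ℝ n q v) = - dot3 (fderiv ℝ w1 q v) (n q) := by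
    intro v
    have hzero : (fun u => dot3 (w1 u) (n u)) = fun _ => (0 : ℝ) :=
      funext fun u => dot3_w1_normal w1 w2 u
    have h0 : fderiv ℝ (fun u => dot3 (w1 u) (n u)) q = 0 := by
      rw [hzero]; exact fderiv_const_apply 0
    have h2 := fderiv_dot3 w1 n q v hw1d hnd
    rw [h0] at h2
    simp only [ContinuousLinearMap.zero_apply] at h2
    linarith
  have hw2n : ∀ v, dot3 (w2 q) (fderiv ℝ n q v) = - dot3 (fderiv ℝ w2 q v) (n q) := by
    intro v
    have hzero : (fun u => dot3 (w2 u) (n u)) = fun _ => (0 : ℝ) :=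
      funext fun u => dot3_w2_normal w1 w2 u
    have h0 : fderiv ℝ (fun u => dot3 (w2 u) (n u)) q = 0 := by
      rw [hzero]; exact fderiv_const_apply 0
    have h2 := fderiv_dot3 w2 n q v hw2d hnd
    rw [h0] at h2
    simp only [ContinuousLinearMap.zero_apply] at h2
    linarith
  -- ⟨ξ, n⟩ = φ on U
  have hxin : ∀ u ∈ U, dot3 (ξ u) (n u) = φ u := by
    intro u hu
    rw [hξdef u hu, dot3_add_left, dot3_add_left, dot3_smul_left, dot3_smul_left,
      dot3_smul_left, hnn u hu, dot3_w1_normal, dot3_w2_normal]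
    ring
  have hpdφ : ∀ v, fderiv ℝ (fun u => dot3 (ξ u) (n u)) q v = fderiv ℝ φ q v := by
    intro v
    have hev : (fun u => dot3 (ξ u) (n u)) =ᶠ[𝓝 q] φ :=
      Filter.eventually_of_mem hmem hxin
    rw [hev.fderiv_eq]
  -- key: ⟨ξ', n⟩ = a⟨w₁', n⟩ + b⟨w₂', n⟩ + φ'
  have key : ∀ v, dot3 (fderiv ℝ ξ q v) (n q)
      = a q * dot3 (fderiv ℝ w1 q v) (n q) + b q * dot3 (fderiv ℝ w2 q v) (n q)
        + fderiv ℝ φ q v := by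
    intro v
    have h := fderiv_dot3 ξ n q v hξd hnd
    rw [hpdφ v] at h
    have hξn' : dot3 (ξ q) (fderiv ℝ n q v)
        = -(a q * dot3 (fderiv ℝ w1 q v) (n q)) - b q * dot3 (fderiv ℝ w2 q v) (n q) := by
      rw [hξdef q hq, dot3_add_left, dot3_add_left, dot3_smul_left, dot3_smul_left,
        dot3_smul_left, hnn1 v, hw1n v, hw2n v]
      ring
    rw [hξn'] at h
    linarith
  have hφq := hφ0 q hq
  constructor
  · have h1 := congrArg (fun z => dot3 z (n q)) (hξu1 q hq)
    rw [sub_eq_add_neg, ← neg_smul] at h1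
    rw [dot3_add_left, dot3_add_left, dot3_smul_left, dot3_smul_left, dot3_smul_left,
      dot3_w1_normal, dot3_w2_normal, hxin q hq] at h1
    have h2 := key (1, 0)
    simp only [pd1] at h1 ⊢
    rw [h1] at h2
    field_simp
    linarith
  · have h1 := congrArg (fun z => dot3 z (n q)) (hξu2 q hq)
    rw [sub_eq_add_neg, ← neg_smul] at h1
    rw [dot3_add_left, dot3_add_left, dot3_smul_left, dot3_smul_left, dot3_smul_left,
      dot3_w1_normal, dot3_w2_normal, hxin q hq] at h1
    have h2 := key (0, 1)
    simp only [pd2] at h1 ⊢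
    rw [h1] at h2
    field_simp
    linarith

end
end

section
/- Let x: U → ℝ³ be a proper frontal with tangent moving basis Ω = (w₁ w₂) and induced unit normal n, and let ξ = φn + ã w₁ + b̃ w₂ be an equiaffine transversal vector field with φ: U → ℝ∖{0} and ã, b̃ smooth. Then: (i) on all of U, (hᵢⱼ) = (1/φ)·[[e_Ω, f₁Ω],[f₂Ω, g_Ω]] = (1/φ)·II_Ω; and (ii) on U∖Σ(x), 𝒟₁ := [[𝒟¹₁₁,𝒟²₁₁],[𝒟¹₂₁,𝒟²₂₁]] = 𝒯₁ − (1/φ)[[ã e_Ω, b̃ e_Ω],[ã f₂Ω, b̃ f₂Ω]] and 𝒟₂ := [[𝒟¹₁₂,𝒟²₁₂],[𝒟¹₂₂,𝒟²₂₂]] = 𝒯₂ − (1/φ)[[ã f₁Ω, b̃ f₁Ω],[ã g_Ω, b̃ g_Ω]], where 𝒯ⱼ := (Ω_{uⱼ}ᵀ Ω) I_Ω⁻¹. -/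
open Matrix Topology Filter

noncomputable section

/-- The Christoffel-type matrix `𝒯₁ = (Ω_{u₁}ᵀ Ω) I_Ω⁻¹`. -/
def TOmega1 (w1 w2 : ℝ × ℝ → V3) (q : ℝ × ℝ) : Matrix (Fin 2) (Fin 2) ℝ :=
  !![dot3 (pd1 w1 q) (w1 q), dot3 (pd1 w1 q) (w2 q);
     dot3 (pd1 w2 q) (w1 q), dot3 (pd1 w2 q) (w2 q)] * (IOmega w1 w2 q)⁻¹

/-- The Christoffel-type matrix `𝒯₂ = (Ω_{u₂}ᵀ Ω) I_Ω⁻¹`. -/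
def TOmega2 (w1 w2 : ℝ × ℝ → V3) (q : ℝ × ℝ) : Matrix (Fin 2) (Fin 2) ℝ :=
  !![dot3 (pd2 w1 q) (w1 q), dot3 (pd2 w1 q) (w2 q);
     dot3 (pd2 w2 q) (w1 q), dot3 (pd2 w2 q) (w2 q)] * (IOmega w1 w2 q)⁻¹

lemma dot3_smul_right (v : V3) (c : ℝ) (w : V3) : dot3 v (c • w) = c * dot3 v w := by
  simp [dot3]; ring

lemma dot3_cross_left (v w : V3) : dot3 v (cross3 v w) = 0 := by
  simp [dot3, cross3]; ring

lemma dot3_cross_right (v w : V3) : dot3 w (cross3 v w) = 0 := by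
  simp [dot3, cross3]; ring

lemma dot3_comb {u v w z : V3} {a b c : ℝ} (h : u = a • v + b • w + c • z) (t : V3) :
    dot3 u t = a * dot3 v t + b * dot3 w t + c * dot3 z t := by
  subst h; simp [dot3]; ring

lemma gram_ne_zero {v w : V3} (h : LinearIndependent ℝ ![v, w]) :
    dot3 v v * dot3 w w - dot3 v w * dot3 v w ≠ 0 := by
  intro hz
  rw [linearIndependent_fin2] at h
  obtain ⟨hw, hav⟩ := h
  have hsum : (v 1 * w 2 - v 2 * w 1)^2 + (v 2 * w 0 - v 0 * w 2)^2
      + (v 0 * w 1 - v 1 * w 0)^2 = 0 := by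
    simp only [dot3] at hz; linear_combination hz
  have h12 : v 1 * w 2 - v 2 * w 1 = 0 := by nlinarith [sq_nonneg (v 1 * w 2 - v 2 * w 1), sq_nonneg (v 2 * w 0 - v 0 * w 2), sq_nonneg (v 0 * w 1 - v 1 * w 0)]
  have h20 : v 2 * w 0 - v 0 * w 2 = 0 := by nlinarith [sq_nonneg (v 1 * w 2 - v 2 * w 1), sq_nonneg (v 2 * w 0 - v 0 * w 2), sq_nonneg (v 0 * w 1 - v 1 * w 0)]
  have h01 : v 0 * w 1 - v 1 * w 0 = 0 := by nlinarith [sq_nonneg (v 1 * w 2 - v 2 * w 1), sq_nonneg (v 2 * w 0 - v 0 * w 2), sq_nonneg (v 0 * w 1 - v 1 * w 0)]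
  have key : ∀ a : ℝ, a * w 0 = v 0 → a * w 1 = v 1 → a * w 2 = v 2 → False := by
    intro a e0 e1 e2
    refine hav a (funext fun i => ?_)
    match i with
    | 0 => simpa using e0
    | 1 => simpa using e1
    | 2 => simpa using e2
  by_cases h0 : w 0 = 0
  · by_cases h1 : w 1 = 0
    · by_cases h2 : w 2 = 0
      · refine hw (funext fun i => ?_)
        match i with
        | 0 => simpa using h0
        | 1 => simpa using h1
        | 2 => simpa using h2
      · refine key (v 2 / w 2) ?_ ?_ ?_ <;> field_simp <;>
          first | rfl | linear_combination h12 | linear_combination -h12 |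
            linear_combination h20 | linear_combination -h20 |
            linear_combination h01 | linear_combination -h01
    · refine key (v 1 / w 1) ?_ ?_ ?_ <;> field_simp <;>
        first | rfl | linear_combination h12 | linear_combination -h12 |
          linear_combination h20 | linear_combination -h20 |
          linear_combination h01 | linear_combination -h01
  · refine key (v 0 / w 0) ?_ ?_ ?_ <;> field_simp <;>
      first | rfl | linear_combination h12 | linear_combination -h12 |
        linear_combination h20 | linear_combination -h20 |
        linear_combination h01 | linear_combination -h01

lemma Dmat_eq {A B C p11 p12 p21 p22 n1 n2 φ a b d1 d2 d3 d4 k1 k2 : ℝ}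
    (hG : A * C - B * B ≠ 0) (hφ : φ ≠ 0)
    (e1 : p11 = d1 * A + d2 * B + k1 * (a * A + b * B))
    (e2 : p12 = d1 * B + d2 * C + k1 * (a * B + b * C))
    (e3 : p21 = d3 * A + d4 * B + k2 * (a * A + b * B))
    (e4 : p22 = d3 * B + d4 * C + k2 * (a * B + b * C))
    (hk1 : n1 = k1 * φ) (hk2 : n2 = k2 * φ) :
    !![d1, d2; d3, d4] = !![p11, p12; p21, p22] * (!![A, B; B, C])⁻¹
      - φ⁻¹ • !![a * n1, b * n1; a * n2, b * n2] := by
  have hdet : IsUnit (!![A, B; B, C]).det := by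
    rw [Matrix.det_fin_two_of]; exact isUnit_iff_ne_zero.mpr (by simpa using hG)
  have hM : !![p11, p12; p21, p22]
      = !![d1 + k1 * a, d2 + k1 * b; d3 + k2 * a, d4 + k2 * b] * !![A, B; B, C] := by
    rw [Matrix.mul_fin_two]
    ext i j
    fin_cases i <;> fin_cases j <;> simp <;>
      first | linear_combination e1 | linear_combination e2 |
        linear_combination e3 | linear_combination e4
  rw [hM, Matrix.mul_nonsing_inv_cancel_right _ _ hdet]
  ext i j
  fin_cases i <;> fin_cases j <;>
    simp [Matrix.smul_apply, hk1, hk2, smul_eq_mul] <;> field_simp <;> ring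

/-- For an equiaffine transversal field `ξ = φn + ã w₁ + b̃ w₂` of a
proper frontal: (i) on all of `U`, `(hᵢⱼ) = (1/φ)·II_Ω`; (ii) on the regular part,
`𝒟₁ = 𝒯₁ − (1/φ)[[ã e_Ω, b̃ e_Ω],[ã f₂Ω, b̃ f₂Ω]]` and
`𝒟₂ = 𝒯₂ − (1/φ)[[ã f₁Ω, b̃ f₁Ω],[ã g_Ω, b̃ g_Ω]]`. -/
theorem statement11 (U : Set (ℝ × ℝ)) (x w1 w2 ξ : ℝ × ℝ → V3)
    (φ at' bt : ℝ × ℝ → ℝ)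
    (hx : ContDiffOn ℝ (⊤ : ℕ∞) x U)
    (hfr : IsFrontal x (inducedNormal w1 w2) U) (hpr : IsProper x U)
    (hΩ : IsTMB x w1 w2 U)
    (hφs : ContDiffOn ℝ (⊤ : ℕ∞) φ U) (hats : ContDiffOn ℝ (⊤ : ℕ∞) at' U)
    (hbts : ContDiffOn ℝ (⊤ : ℕ∞) bt U) (hφ0 : ∀ q ∈ U, φ q ≠ 0)
    (hξs : ContDiffOn ℝ (⊤ : ℕ∞) ξ U)
    (hξdef : ∀ q ∈ U,
      ξ q = φ q • inducedNormal w1 w2 q + (at' q • w1 q + bt q • w2 q))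
    (hξtrans : ∀ q ∈ U, ξ q ∉ Submodule.span ℝ {w1 q, w2 q})
    (D111 D211 D112 D212 D121 D221 D122 D222
      h11 h12 h21 h22 S11 S12 S21 S22 : ℝ × ℝ → ℝ)
    (hw1u1 : ∀ q ∈ U, pd1 w1 q = D111 q • w1 q + D211 q • w2 q + h11 q • ξ q)
    (hw1u2 : ∀ q ∈ U, pd2 w1 q = D112 q • w1 q + D212 q • w2 q + h12 q • ξ q)
    (hw2u1 : ∀ q ∈ U, pd1 w2 q = D121 q • w1 q + D221 q • w2 q + h21 q • ξ q)
    (hw2u2 : ∀ q ∈ U, pd2 w2 q = D122 q • w1 q + D222 q • w2 q + h22 q • ξ q)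
    (hξu1 : ∀ q ∈ U, pd1 ξ q = -(S11 q) • w1 q - S12 q • w2 q)
    (hξu2 : ∀ q ∈ U, pd2 ξ q = -(S21 q) • w1 q - S22 q • w2 q) :
    (∀ q ∈ U,
      !![h11 q, h12 q; h21 q, h22 q] = (φ q)⁻¹ • IIOmega w1 w2 q) ∧
    (∀ q ∈ U \ SingSet x U,
      !![D111 q, D211 q; D121 q, D221 q] = TOmega1 w1 w2 q - (φ q)⁻¹ •
        !![at' q * dot3 (pd1 w1 q) (inducedNormal w1 w2 q),
           bt q * dot3 (pd1 w1 q) (inducedNormal w1 w2 q);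
           at' q * dot3 (pd1 w2 q) (inducedNormal w1 w2 q),
           bt q * dot3 (pd1 w2 q) (inducedNormal w1 w2 q)] ∧
      !![D112 q, D212 q; D122 q, D222 q] = TOmega2 w1 w2 q - (φ q)⁻¹ •
        !![at' q * dot3 (pd2 w1 q) (inducedNormal w1 w2 q),
           bt q * dot3 (pd2 w1 q) (inducedNormal w1 w2 q);
           at' q * dot3 (pd2 w2 q) (inducedNormal w1 w2 q),
           bt q * dot3 (pd2 w2 q) (inducedNormal w1 w2 q)]) := by
  have main : ∀ q ∈ U,
      (!![h11 q, h12 q; h21 q, h22 q] = (φ q)⁻¹ • IIOmega w1 w2 q) ∧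
      (!![D111 q, D211 q; D121 q, D221 q] = TOmega1 w1 w2 q - (φ q)⁻¹ •
        !![at' q * dot3 (pd1 w1 q) (inducedNormal w1 w2 q),
           bt q * dot3 (pd1 w1 q) (inducedNormal w1 w2 q);
           at' q * dot3 (pd1 w2 q) (inducedNormal w1 w2 q),
           bt q * dot3 (pd1 w2 q) (inducedNormal w1 w2 q)]) ∧
      (!![D112 q, D212 q; D122 q, D222 q] = TOmega2 w1 w2 q - (φ q)⁻¹ •
        !![at' q * dot3 (pd2 w1 q) (inducedNormal w1 w2 q),
           bt q * dot3 (pd2 w1 q) (inducedNormal w1 w2 q);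
           at' q * dot3 (pd2 w2 q) (inducedNormal w1 w2 q),
           bt q * dot3 (pd2 w2 q) (inducedNormal w1 w2 q)]) := by
    intro q hq
    set n : V3 := inducedNormal w1 w2 q with hn
    set A : ℝ := dot3 (w1 q) (w1 q) with hA
    set B : ℝ := dot3 (w1 q) (w2 q) with hB
    set C : ℝ := dot3 (w2 q) (w2 q) with hC
    have horthn1 : dot3 (w1 q) n = 0 := by
      rw [hn, inducedNormal, dot3_smul_right, dot3_cross_left, mul_zero]
    have horthn2 : dot3 (w2 q) n = 0 := by
      rw [hn, inducedNormal, dot3_smul_right, dot3_cross_right, mul_zero]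
    have hnw1 : dot3 n (w1 q) = 0 := (dot3_comm _ _).trans horthn1
    have hnw2 : dot3 n (w2 q) = 0 := (dot3_comm _ _).trans horthn2
    have hBsym : dot3 (w2 q) (w1 q) = B := dot3_comm _ _
    have hnn : dot3 n n = 1 := hfr.2.2.2.1 q hq
    have hξ' : ξ q = φ q • n + at' q • w1 q + bt q • w2 q := by
      rw [hξdef q hq, ← add_assoc]
    have hξn : dot3 (ξ q) n = φ q := by
      rw [dot3_comb hξ', hnn, horthn1, horthn2]; ring
    have hξw1 : dot3 (ξ q) (w1 q) = at' q * A + bt q * B := by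
      rw [dot3_comb hξ', hnw1, hBsym]; ring
    have hξw2 : dot3 (ξ q) (w2 q) = at' q * B + bt q * C := by
      rw [dot3_comb hξ', hnw2]; ring
    have hk11 : dot3 (pd1 w1 q) n = h11 q * φ q := by
      rw [dot3_comb (hw1u1 q hq), horthn1, horthn2, hξn]; ring
    have hk12 : dot3 (pd2 w1 q) n = h12 q * φ q := by
      rw [dot3_comb (hw1u2 q hq), horthn1, horthn2, hξn]; ring
    have hk21 : dot3 (pd1 w2 q) n = h21 q * φ q := by
      rw [dot3_comb (hw2u1 q hq), horthn1, horthn2, hξn]; ring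
    have hk22 : dot3 (pd2 w2 q) n = h22 q * φ q := by
      rw [dot3_comb (hw2u2 q hq), horthn1, horthn2, hξn]; ring
    have hφ : φ q ≠ 0 := hφ0 q hq
    have hG : A * C - B * B ≠ 0 := gram_ne_zero (hΩ.2.2.1 q hq)
    have hIO : IOmega w1 w2 q = !![A, B; B, C] := by
      simp only [IOmega, hBsym, ← hA, ← hB, ← hC]
    refine ⟨?_, ?_, ?_⟩
    · ext i j
      fin_cases i <;> fin_cases j <;>
        simp [IIOmega, smul_eq_mul, hk11, hk12, hk21, hk22] <;>
        field_simp <;>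
        simp only [← hn, hk11, hk12, hk21, hk22]
    · have e1 : dot3 (pd1 w1 q) (w1 q)
          = D111 q * A + D211 q * B + h11 q * (at' q * A + bt q * B) := by
        rw [dot3_comb (hw1u1 q hq), hBsym, hξw1]
      have e2 : dot3 (pd1 w1 q) (w2 q)
          = D111 q * B + D211 q * C + h11 q * (at' q * B + bt q * C) := by
        rw [dot3_comb (hw1u1 q hq), hξw2]
      have e3 : dot3 (pd1 w2 q) (w1 q)
          = D121 q * A + D221 q * B + h21 q * (at' q * A + bt q * B) := by
        rw [dot3_comb (hw2u1 q hq), hBsym, hξw1]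
      have e4 : dot3 (pd1 w2 q) (w2 q)
          = D121 q * B + D221 q * C + h21 q * (at' q * B + bt q * C) := by
        rw [dot3_comb (hw2u1 q hq), hξw2]
      rw [TOmega1, hIO]
      exact Dmat_eq hG hφ e1 e2 e3 e4 hk11 hk21
    · have e1 : dot3 (pd2 w1 q) (w1 q)
          = D112 q * A + D212 q * B + h12 q * (at' q * A + bt q * B) := by
        rw [dot3_comb (hw1u2 q hq), hBsym, hξw1]
      have e2 : dot3 (pd2 w1 q) (w2 q)
          = D112 q * B + D212 q * C + h12 q * (at' q * B + bt q * C) := by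
        rw [dot3_comb (hw1u2 q hq), hξw2]
      have e3 : dot3 (pd2 w2 q) (w1 q)
          = D122 q * A + D222 q * B + h22 q * (at' q * A + bt q * B) := by
        rw [dot3_comb (hw2u2 q hq), hBsym, hξw1]
      have e4 : dot3 (pd2 w2 q) (w2 q)
          = D122 q * B + D222 q * C + h22 q * (at' q * B + bt q * C) := by
        rw [dot3_comb (hw2u2 q hq), hξw2]
      rw [TOmega2, hIO]
      exact Dmat_eq hG hφ e1 e2 e3 e4 hk12 hk22
  exact ⟨fun q hq => (main q hq).1,
    fun q hq => ⟨(main q hq.1).2.1, (main q hq.1).2.2⟩⟩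


end
end
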